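/- Let N ≥ 1 be an integer, let C ≥ 0, and let g : {1, 2, 3, …} → [0,+∞) be a function satisfying: (a) (monotonicity along multiples) g(hk) ≤ g(k) for all positive integers h, k; (b) for all positive integers m < n, g(n) ≤ g(m) + C·(n^{N−1} − m^{N−1})/n^{N−1}. Then the limit of g(n) as n → ∞ exists and equals the infimum inf{g(m) : m ≥ 1}. -/

import Mathlib

/-- Abstract convergence lemma: a nonnegative function `g` on the positive integers which is
monotone along multiples (`g(hk) ≤ g(k)`) and almost monotone in the sense
`g(n) ≤ g(m) + C (n^{N-1} - m^{N-1})/n^{N-1}` for `m < n` converges, as `n → ∞`, to its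
infimum over the positive integers. -/
theorem tendsto_sInf_of_multiplicative_monotone
    (N : ℕ) (hN : 1 ≤ N) (C : ℝ) (hC : 0 ≤ C) (g : ℕ → ℝ)
    (hg0 : ∀ n : ℕ, 0 < n → 0 ≤ g n)
    (hmono : ∀ h k : ℕ, 0 < h → 0 < k → g (h * k) ≤ g k)
    (hb : ∀ m n : ℕ, 0 < m → m < n →
      g n ≤ g m + C * ((n : ℝ) ^ (N - 1) - (m : ℝ) ^ (N - 1)) / (n : ℝ) ^ (N - 1)) :
    Filter.Tendsto g Filter.atTop (nhds (sInf (g '' {m : ℕ | 0 < m}))) := by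
  set S : Set ℝ := g '' {m : ℕ | 0 < m} with hS
  have hne : S.Nonempty := ⟨g 1, ⟨1, by norm_num, rfl⟩⟩
  have hbd : BddBelow S := ⟨0, by rintro x ⟨m, hm, rfl⟩; exact hg0 m hm⟩
  set L := sInf S with hL
  have hLle : ∀ n : ℕ, 0 < n → L ≤ g n := fun n hn => csInf_le hbd ⟨n, hn, rfl⟩
  rw [Metric.tendsto_atTop]
  intro ε hε
  obtain ⟨x, ⟨m, hm, rfl⟩, hxlt⟩ := exists_lt_of_csInf_lt hne (show L < L + ε / 2 by linarith)
  set k := N - 1 with hk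
  obtain ⟨n₁, hn₁⟩ := exists_nat_gt (C * k * m / (ε / 2))
  refine ⟨max n₁ (m + 1), fun n hn => ?_⟩
  have hnm : m < n := lt_of_lt_of_le (Nat.lt_succ_self m) (le_trans (le_max_right _ _) hn)
  have hn0 : 0 < n := lt_trans hm hnm
  have hnn1 : (n₁ : ℝ) ≤ n := Nat.cast_le.2 (le_trans (le_max_left _ _) hn)
  have hnR : (0:ℝ) < n := Nat.cast_pos.2 hn0
  have hgn : g n < L + ε := by
    set q := n / m with hq
    have hq1 : 0 < q := Nat.div_pos hnm.le hm
    have hqm_le : q * m ≤ n := Nat.div_mul_le_self n m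
    have hgqm : g (q * m) ≤ g m := hmono q m hq1 hm
    rcases eq_or_lt_of_le hqm_le with heq | hlt
    · calc g n = g (q * m) := by rw [heq]
        _ ≤ g m := hgqm
        _ < L + ε / 2 := hxlt
        _ ≤ L + ε := by linarith
    · have hbn := hb (q * m) n (Nat.mul_pos hq1 hm) hlt
      -- bound the correction term
      have hdiff : (n : ℝ) - (q * m : ℕ) ≤ m := by
        have hdm : q * m + n % m = n := Nat.div_add_mod' n m
        have hmod : n % m < m := Nat.mod_lt n hm
        have : n - q * m < m := by omega
        have h2 : ((n - q * m : ℕ) : ℝ) ≤ m := by exact_mod_cast this.le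
        rw [Nat.cast_sub hqm_le] at h2
        exact h2
      have ha0 : (0:ℝ) ≤ (q * m : ℕ) := Nat.cast_nonneg _
      have hab : ((q * m : ℕ) : ℝ) ≤ n := Nat.cast_le.2 hqm_le
      set a := ((q * m : ℕ) : ℝ)
      set b := (n : ℝ)
      have hratio : (1:ℝ) + k * (a / b - 1) ≤ (a / b) ^ k := by
        have hx : (-2:ℝ) ≤ a / b - 1 := by
          have : (0:ℝ) ≤ a / b := div_nonneg ha0 hnR.le
          linarith
        have h := one_add_mul_le_pow hx k
        have h1ab : 1 + (a / b - 1) = a / b := by ring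
        rwa [h1ab] at h
      have hcorr : (b ^ k - a ^ k) / b ^ k ≤ k * m / b := by
        have hbk : (0:ℝ) < b ^ k := pow_pos hnR k
        have h1 : (b ^ k - a ^ k) / b ^ k = 1 - (a / b) ^ k := by
          rw [div_pow, sub_div, div_self hbk.ne']
        rw [h1]
        have h2 : (1:ℝ) - (a / b) ^ k ≤ k * (1 - a / b) := by nlinarith
        have h3 : (k:ℝ) * (1 - a / b) ≤ k * m / b := by
          rw [mul_div_assoc]
          apply mul_le_mul_of_nonneg_left _ (Nat.cast_nonneg k)
          rw [le_div_iff₀ hnR]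
          have hfe : (1 - a / b) * b = b - a := by field_simp
          linarith
        linarith
      have hCcorr : C * (b ^ k - a ^ k) / b ^ k ≤ ε / 2 := by
        have h4 : C * ((b ^ k - a ^ k) / b ^ k) ≤ C * (k * m / b) :=
          mul_le_mul_of_nonneg_left hcorr hC
        have h5 : C * (k * m / b) ≤ ε / 2 := by
          rw [mul_div_assoc'] at *
          rw [div_le_iff₀ hnR]
          have h6 : C * k * m / (ε / 2) < b := lt_of_lt_of_le hn₁ hnn1
          rw [div_lt_iff₀ (by linarith : (0:ℝ) < ε / 2)] at h6
          nlinarith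
        calc C * (b ^ k - a ^ k) / b ^ k = C * ((b ^ k - a ^ k) / b ^ k) := by ring
          _ ≤ C * (k * m / b) := h4
          _ ≤ ε / 2 := h5
      calc g n ≤ g (q * m) + C * (b ^ k - a ^ k) / b ^ k := hbn
        _ ≤ g m + ε / 2 := by linarith
        _ < L + ε := by linarith
  have hge : L ≤ g n := hLle n hn0
  rw [Real.dist_eq, abs_lt]
  constructor <;> linarith
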